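/- arXiv:2411.07661 — 4 statements merged into one kernel-verified Lean document; each statement's English description precedes it below -/
import Mathlib

section
/- Suppose 0 < δt < 2/(3L). Then for all u₁, u₂ ∈ X, ⟨∇F^n(u₁) − ∇F^n(u₂), u₁ − u₂⟩ ≥ (2/(3δt) − L)‖u₁ − u₂‖², with 2/(3δt) − L > 0; that is, the gradient of F^n is strongly monotone with parameter 2/(3δt) − L. -/
open scoped RealInnerProductSpace
open Asymptotics Filter

lemma my_hasGradientAt_sub {X : Type*} [NormedAddCommGroup X] [InnerProductSpace ℝ X]
    [CompleteSpace X] {g₁ g₂ : X → ℝ} {a b x : X}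
    (h₁ : HasGradientAt g₁ a x) (h₂ : HasGradientAt g₂ b x) :
    HasGradientAt (fun y => g₁ y - g₂ y) (a - b) x := by
  rw [hasGradientAt_iff_hasFDerivAt] at *
  rw [map_sub]
  exact h₁.sub h₂

lemma my_hasGradientAt_smul_sq {X : Type*} [NormedAddCommGroup X] [InnerProductSpace ℝ X] [CompleteSpace X]
    (c : ℝ) (w x : X) :
    HasGradientAt (fun u => c * ‖u - w‖ ^ 2) ((2 * c) • (x - w)) x := by
  rw [hasGradientAt_iff_isLittleO]
  have key : ∀ v : X, c * ‖v - w‖ ^ 2 - c * ‖x - w‖ ^ 2 - ⟪(2 * c) • (x - w), v - x⟫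
      = c * ‖v - x‖ ^ 2 := by
    intro v
    have h1 : v - w = (v - x) + (x - w) := by abel
    rw [real_inner_smul_left, h1, norm_add_sq_real]
    ring_nf
    rw [real_inner_comm]
    ring
  have h0 : (fun v : X => c * ‖v - x‖) =o[nhds x] (fun _ => (1:ℝ)) := by
    rw [isLittleO_one_iff]
    have : Filter.Tendsto (fun v : X => v - x) (nhds x) (nhds (x - x)) :=
      (continuous_id.sub continuous_const).tendsto x
    rw [sub_self] at this
    simpa using (this.norm.const_mul c)
  have h2 := h0.mul_isBigO (isBigO_refl (fun v : X => ‖v - x‖) (nhds x))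
  have h3 : (fun v : X => c * ‖v - x‖ * ‖v - x‖) =o[nhds x] (fun v : X => ‖v - x‖) := by
    simpa using h2
  refine ((isLittleO_norm_right).mp h3).congr ?_ (fun v => rfl)
  intro v; rw [key]; ring

lemma my_hasGradientAt_inner {X : Type*} [NormedAddCommGroup X] [InnerProductSpace ℝ X]
    [CompleteSpace X] (a w x : X) :
    HasGradientAt (fun u => ⟪a, u - w⟫) a x := by
  rw [hasGradientAt_iff_isLittleO]
  have : ∀ v : X, ⟪a, v - w⟫ - ⟪a, x - w⟫ - ⟪a, v - x⟫ = 0 := by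
    intro v
    rw [← inner_sub_right, ← inner_sub_right]
    rw [show v - w - (x - w) - (v - x) = 0 by abel, inner_zero_right]
  exact (isLittleO_zero _ _).congr (fun v => (this v).symm) (fun _ => rfl)

/-- If `0 < δt < 2/(3L)` then the gradient of
`Fⁿ(u) = (1/(3δt))‖u - uⁿ⁻¹‖² - F(u) - ⟪f(uⁿ) - f(uⁿ⁻¹), u - uⁿ⁻¹⟫`
is strongly monotone with parameter `2/(3δt) - L > 0`. -/
theorem Fn_gradient_strongly_monotone
    {X : Type*} [NormedAddCommGroup X] [InnerProductSpace ℝ X] [FiniteDimensional ℝ X]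
    (F : X → ℝ) (f : X → X) (hF : ∀ x : X, HasGradientAt F (f x) x)
    (L : ℝ) (hL : 0 < L) (hLip : ∀ x y : X, ‖f x - f y‖ ≤ L * ‖x - y‖)
    (δt : ℝ) (hδt : 0 < δt) (hδt2 : δt < 2 / (3 * L))
    (un unm1 : X)
    (Fn : X → ℝ)
    (hFn : ∀ u : X, Fn u = (1 / (3 * δt)) * ‖u - unm1‖ ^ 2 - F u
      - ⟪f un - f unm1, u - unm1⟫) :
    0 < 2 / (3 * δt) - L ∧
      ∀ u₁ u₂ : X, (2 / (3 * δt) - L) * ‖u₁ - u₂‖ ^ 2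
        ≤ ⟪gradient Fn u₁ - gradient Fn u₂, u₁ - u₂⟫ := by
  have hpos : 0 < 2 / (3 * δt) - L := by
    rw [sub_pos, lt_div_iff₀ (by positivity)]
    have := (lt_div_iff₀ (by positivity : (0:ℝ) < 3 * L)).mp hδt2
    nlinarith
  refine ⟨hpos, fun u₁ u₂ => ?_⟩
  have hgrad : ∀ u : X, gradient Fn u
      = (2 * (1 / (3 * δt))) • (u - unm1) - f u - (f un - f unm1) := by
    intro u
    have h : HasGradientAt Fn
        ((2 * (1 / (3 * δt))) • (u - unm1) - f u - (f un - f unm1)) u := by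
      have h1 := my_hasGradientAt_smul_sq (1 / (3 * δt)) unm1 u
      have h2 := hF u
      have h3 := my_hasGradientAt_inner (f un - f unm1) unm1 u
      have := my_hasGradientAt_sub (my_hasGradientAt_sub h1 h2) h3
      exact this.congr_of_eventuallyEq (Filter.Eventually.of_forall fun v => hFn v)
    exact h.gradient
  rw [hgrad, hgrad]
  have hd : ((2 * (1 / (3 * δt))) • (u₁ - unm1) - f u₁ - (f un - f unm1))
      - ((2 * (1 / (3 * δt))) • (u₂ - unm1) - f u₂ - (f un - f unm1))
      = (2 / (3 * δt)) • (u₁ - u₂) - (f u₁ - f u₂) := by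
    rw [smul_sub, smul_sub]
    have : (2 : ℝ) * (1 / (3 * δt)) = 2 / (3 * δt) := by ring
    rw [this, smul_sub]; abel
  rw [hd, inner_sub_left, real_inner_smul_left, real_inner_self_eq_norm_sq]
  have hcs : ⟪f u₁ - f u₂, u₁ - u₂⟫ ≤ L * ‖u₁ - u₂‖ ^ 2 := by
    calc ⟪f u₁ - f u₂, u₁ - u₂⟫ ≤ ‖f u₁ - f u₂‖ * ‖u₁ - u₂‖ := real_inner_le_norm _ _
      _ ≤ (L * ‖u₁ - u₂‖) * ‖u₁ - u₂‖ := by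
          apply mul_le_mul_of_nonneg_right (hLip u₁ u₂) (norm_nonneg _)
      _ = L * ‖u₁ - u₂‖ ^ 2 := by ring
  nlinarith [sq_nonneg ‖u₁ - u₂‖]
end

section
/- Suppose y^n ∈ X satisfies the optimality condition ∇H^n(y^n) − ∇F^n(u^n) + M(y^n − u^n) = 0 and F^n is such that its gradient is strongly monotone with parameter 2/(3δt) − L (which holds since δt < 2/(3L)). Then E^n(y^n) ≤ E^n(u^n) − (4/(3δt) − L/2)‖y^n − u^n‖² − ‖y^n − u^n‖_M², i.e., E^n(y^n) ≤ E^n(u^n) − ‖d^n‖²_{N₁} with N₁ = (4/(3δt) − L/2)I + M and d^n = y^n − u^n. -/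
/-!
With `d = yⁿ - uⁿ`, convexity of `H` gives `H(yⁿ) - H(uⁿ) ≤ ⟪h(yⁿ), d⟫` and the descent lemma for
the `L`-Lipschitz gradient `f` gives `F(yⁿ) - F(uⁿ) ≤ ⟪f(uⁿ), d⟫ + L/2 ‖d‖²`. The remaining terms
of `Eⁿ` are quadratic and expand exactly, and pairing the optimality condition with `d` turns the
sum of the two bounds into the claimed estimate.
-/

open scoped RealInnerProductSpace
open Set AffineMap

section Gradient

variable {X : Type*} [NormedAddCommGroup X] [InnerProductSpace ℝ X] [CompleteSpace X]
  {f g : X → ℝ} {a b x y : X}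

theorem HasGradientAt.add (hf : HasGradientAt f a x) (hg : HasGradientAt g b x) :
    HasGradientAt (fun u => f u + g u) (a + b) x := by
  rw [hasGradientAt_iff_hasFDerivAt, map_add] at *
  exact hf.add hg

theorem HasGradientAt.sub (hf : HasGradientAt f a x) (hg : HasGradientAt g b x) :
    HasGradientAt (fun u => f u - g u) (a - b) x := by
  rw [hasGradientAt_iff_hasFDerivAt, map_sub] at *
  exact hf.sub hg

theorem HasGradientAt.const_mul (c : ℝ) (hf : HasGradientAt f a x) :
    HasGradientAt (fun u => c * f u) (c • a) x := by
  rw [hasGradientAt_iff_hasFDerivAt, map_smul] at *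
  exact hf.const_smul c

theorem hasGradientAt_norm_sub_sq (c x : X) :
    HasGradientAt (fun u => ‖u - c‖ ^ 2) ((2 : ℝ) • (x - c)) x := by
  rw [hasGradientAt_iff_hasFDerivAt]
  refine (((hasFDerivAt_id x).sub_const c).norm_sq).congr_fderiv ?_
  ext v
  simp

theorem hasGradientAt_inner_sub (c b x : X) : HasGradientAt (fun u => ⟪c, u - b⟫) c x := by
  rw [hasGradientAt_iff_hasFDerivAt]
  refine ((innerSL ℝ c).hasFDerivAt.comp x ((hasFDerivAt_id x).sub_const b)).congr_fderiv ?_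
  ext v
  simp

theorem HasGradientAt.hasDerivAt_comp_lineMap {t : ℝ} (hf : HasGradientAt f a (lineMap x y t)) :
    HasDerivAt (f ∘ lineMap x y) ⟪a, y - x⟫ t := by
  simpa using hf.hasFDerivAt.comp_hasDerivAt t hasDerivAt_lineMap

theorem ConvexOn.add_inner_le_of_hasGradientAt {s : Set X} (hf : ConvexOn ℝ s f) (hx : x ∈ s)
    (hy : y ∈ s) (hfx : HasGradientAt f a x) : f x + ⟪a, y - x⟫ ≤ f y := by
  have hline : ConvexOn ℝ (Icc (0 : ℝ) 1) (f ∘ lineMap x y) :=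
    (hf.comp_affineMap (lineMap x y)).subset (fun t ht => hf.1.lineMap_mem hx hy ht)
      (convex_Icc 0 1)
  have hslope := hline.le_slope_of_hasDerivAt (left_mem_Icc.2 zero_le_one)
    (right_mem_Icc.2 zero_le_one) zero_lt_one
    (HasGradientAt.hasDerivAt_comp_lineMap (by simpa using hfx))
  simp only [slope_def_field, Function.comp_apply, lineMap_apply_one, lineMap_apply_zero, sub_zero,
    div_one] at hslope
  linarith

theorem le_add_inner_add_of_lipschitz_gradient {f' : X → X} (hf : ∀ x, HasGradientAt f (f' x) x)
    {L : ℝ} (hL : ∀ x y, ‖f' x - f' y‖ ≤ L * ‖x - y‖) (x y : X) :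
    f y ≤ f x + ⟪f' x, y - x⟫ + L / 2 * ‖y - x‖ ^ 2 := by
  set e := y - x
  -- `f` on the segment minus its quadratic model; the Lipschitz bound makes it antitone
  set φ : ℝ → ℝ := fun t => f (lineMap x y t) - t * ⟪f' x, e⟫ - t ^ 2 * (L / 2 * ‖e‖ ^ 2)
  have hφ : ∀ t, HasDerivAt φ (⟪f' (lineMap x y t) - f' x, e⟫ - t * (L * ‖e‖ ^ 2)) t := by
    intro t
    refine HasDerivAt.congr_deriv (((hf (lineMap x y t)).hasDerivAt_comp_lineMap.sub
      ((hasDerivAt_id t).mul_const ⟪f' x, e⟫)).sub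
      ((hasDerivAt_pow 2 t).mul_const (L / 2 * ‖e‖ ^ 2))) ?_
    simp only [inner_sub_left, e]
    push_cast
    ring
  have hφ' : ∀ t ∈ interior (Icc (0 : ℝ) 1),
      ⟪f' (lineMap x y t) - f' x, e⟫ - t * (L * ‖e‖ ^ 2) ≤ 0 := by
    intro t ht
    rw [interior_Icc] at ht
    have hdist : ‖lineMap x y t - x‖ = t * ‖e‖ := by
      rw [← dist_eq_norm, dist_lineMap_left, dist_eq_norm', Real.norm_of_nonneg ht.1.le]
    refine sub_nonpos.2 ?_
    calc ⟪f' (lineMap x y t) - f' x, e⟫ ≤ ‖f' (lineMap x y t) - f' x‖ * ‖e‖ :=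
          real_inner_le_norm _ _
      _ ≤ L * (t * ‖e‖) * ‖e‖ := by
          gcongr
          exact hdist ▸ hL _ _
      _ = t * (L * ‖e‖ ^ 2) := by ring
  have hanti := antitoneOn_of_hasDerivWithinAt_nonpos (convex_Icc 0 1)
    (fun t _ => (hφ t).continuousAt.continuousWithinAt) (fun t _ => (hφ t).hasDerivWithinAt) hφ'
  have := hanti (left_mem_Icc.2 zero_le_one) (right_mem_Icc.2 zero_le_one) zero_le_one
  simp only [lineMap_apply_one, one_mul, one_pow, lineMap_apply_zero, zero_mul, sub_zero,
    zero_pow two_ne_zero, φ] at this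
  linarith

end Gradient

theorem energy_decrease_un_general
    {X : Type*} [NormedAddCommGroup X] [InnerProductSpace ℝ X] [FiniteDimensional ℝ X]
    (H : X → ℝ) (h : X → X) (hH : ∀ x : X, HasGradientAt H (h x) x)
    (hHconv : ConvexOn ℝ Set.univ H)
    (F : X → ℝ) (f : X → X) (hF : ∀ x : X, HasGradientAt F (f x) x)
    (L : ℝ) (hLip : ∀ x y : X, ‖f x - f y‖ ≤ L * ‖x - y‖)
    (δt : ℝ)
    (M : X →L[ℝ] X)
    (un unm1 : X)
    (Hn Fn En : X → ℝ)
    (hHn : ∀ u : X, Hn u = H u + (1 / δt) * ‖u - un‖ ^ 2)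
    (hFn : ∀ u : X, Fn u = (1 / (3 * δt)) * ‖u - unm1‖ ^ 2 - F u
      - ⟪f un - f unm1, u - unm1⟫)
    (hEn : ∀ u : X, En u = Hn u - Fn u)
    (yn : X)
    (hopt : gradient Hn yn - gradient Fn un + M (yn - un) = 0) :
    En yn ≤ En un - (4 / (3 * δt) - L / 2) * ‖yn - un‖ ^ 2
      - ⟪M (yn - un), yn - un⟫ := by
  rw [((hH yn).add ((hasGradientAt_norm_sub_sq un yn).const_mul _)).congr_of_eventuallyEq
      (.of_forall hHn) |>.gradient,
    ((((hasGradientAt_norm_sub_sq unm1 un).const_mul _).sub (hF un)).sub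
      (hasGradientAt_inner_sub _ unm1 un)).congr_of_eventuallyEq (.of_forall hFn) |>.gradient]
    at hopt
  have hconv := hHconv.add_inner_le_of_hasGradientAt (mem_univ yn) (mem_univ un) (hH yn)
  have hdesc := le_add_inner_add_of_lipschitz_gradient hF hLip un yn
  rw [hEn, hEn, hHn, hHn, hFn, hFn, sub_self, norm_zero,
    show yn - unm1 = (un - unm1) + (yn - un) by abel, norm_add_sq_real, inner_add_right]
  rw [show un - yn = -(yn - un) by abel, inner_neg_right] at hconv
  -- named so that `inner_sub_left` below does not split these differences
  set d := yn - un
  set w := un - unm1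
  set g := f un - f unm1
  have hopt_d := congrArg (⟪·, d⟫) hopt
  simp only [inner_add_left, inner_sub_left, real_inner_smul_left, inner_zero_left,
    real_inner_self_eq_norm_sq] at hopt_d
  linear_combination hconv + hdesc + hopt_d

/-- Energy decrease: if `yⁿ` satisfies the optimality condition
`∇Hⁿ(yⁿ) - ∇Fⁿ(uⁿ) + M(yⁿ - uⁿ) = 0` and `0 < δt < 2/(3L)`, then
`Eⁿ(yⁿ) ≤ Eⁿ(uⁿ) - (4/(3δt) - L/2)‖yⁿ - uⁿ‖² - ‖yⁿ - uⁿ‖²_M`. -/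
theorem energy_decrease_un
    {X : Type*} [NormedAddCommGroup X] [InnerProductSpace ℝ X] [FiniteDimensional ℝ X]
    (H : X → ℝ) (h : X → X) (hH : ∀ x : X, HasGradientAt H (h x) x)
    (hHconv : ConvexOn ℝ Set.univ H)
    (F : X → ℝ) (f : X → X) (hF : ∀ x : X, HasGradientAt F (f x) x)
    (L : ℝ) (hL : 0 < L) (hLip : ∀ x y : X, ‖f x - f y‖ ≤ L * ‖x - y‖)
    (δt : ℝ) (hδt : 0 < δt) (hδt2 : δt < 2 / (3 * L))
    (M : X →L[ℝ] X) (hMsym : ∀ x y : X, ⟪M x, y⟫ = ⟪x, M y⟫)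
    (hMpsd : ∀ x : X, 0 ≤ ⟪M x, x⟫)
    (un unm1 : X)
    (Hn Fn En : X → ℝ)
    (hHn : ∀ u : X, Hn u = H u + (1 / δt) * ‖u - un‖ ^ 2)
    (hFn : ∀ u : X, Fn u = (1 / (3 * δt)) * ‖u - unm1‖ ^ 2 - F u
      - ⟪f un - f unm1, u - unm1⟫)
    (hEn : ∀ u : X, En u = Hn u - Fn u)
    (yn : X)
    (hopt : gradient Hn yn - gradient Fn un + M (yn - un) = 0) :
    En yn ≤ En un - (4 / (3 * δt) - L / 2) * ‖yn - un‖ ^ 2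
      - ⟪M (yn - un), yn - un⟫ :=
  energy_decrease_un_general H h hH hHconv F f hF L hLip δt M un unm1 Hn Fn En hHn hFn hEn yn hopt
end

section
/- Let ũ^n = (4/3)u^n − (1/3)u^{n−1} and suppose y^n ∈ X satisfies (2/(3δt))(3y^n − 4u^n + u^{n−1}) + M(y^n − ũ^n) + h(y^n) + 2f(u^n) − f(u^{n−1}) = 0, with δt < 2/(3L). Then E^n(y^n) ≤ E^n(u^n) − (4/(3δt) − L/2)‖y^n − u^n‖² − (5/6)‖y^n − u^n‖_M² + (1/6)‖u^n − u^{n−1}‖_M². -/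
/-!
Convexity of `H` bounds `H yⁿ - H uⁿ` by `⟪h yⁿ, yⁿ - uⁿ⟫`, and the Lipschitz gradient bounds
`F yⁿ - F uⁿ` by `⟪f uⁿ, yⁿ - uⁿ⟫ + L/2 ‖yⁿ - uⁿ‖²`. Pairing the optimality condition with
`yⁿ - uⁿ` eliminates these inner products, and the remaining cross term
`⟪M (uⁿ - uⁿ⁻¹), yⁿ - uⁿ⟫` is absorbed by `2 ⟪M x, y⟫ ≤ ‖x‖²_M + ‖y‖²_M`.
-/

open scoped RealInnerProductSpace

section Gradient

variable {X : Type*} [NormedAddCommGroup X] [InnerProductSpace ℝ X] [CompleteSpace X]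

theorem HasGradientAt.hasDerivAt_comp_add_smul {G : X → ℝ} {g x v : X} {t : ℝ}
    (hG : HasGradientAt G g (x + t • v)) :
    HasDerivAt (fun s : ℝ => G (x + s • v)) ⟪g, v⟫ t := by
  have hline : HasDerivAt (fun s : ℝ => x + s • v) v t := by
    simpa using ((hasDerivAt_id t).smul_const v).const_add x
  exact (hasGradientAt_iff_hasFDerivAt.mp hG).comp_hasDerivAt t hline

theorem ConvexOn.add_inner_le_of_hasGradientAt_s14 {H : X → ℝ} {g x : X}
    (hconv : ConvexOn ℝ Set.univ H) (hx : HasGradientAt H g x) (y : X) :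
    H x + ⟪g, y - x⟫ ≤ H y := by
  have hline : ConvexOn ℝ Set.univ (fun t : ℝ => H (x + t • (y - x))) := by
    simpa [Function.comp_def, AffineMap.lineMap_apply, add_comm] using
      hconv.comp_affineMap (AffineMap.lineMap x y)
  have hderiv : HasDerivAt (fun t : ℝ => H (x + t • (y - x))) ⟪g, y - x⟫ 0 :=
    HasGradientAt.hasDerivAt_comp_add_smul (by simpa using hx)
  have hslope := hline.le_slope_of_hasDerivAt (Set.mem_univ 0) (Set.mem_univ 1) one_pos hderiv
  simp only [slope_def_field, zero_smul, add_zero, one_smul, add_sub_cancel, sub_zero,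
    div_one] at hslope
  linarith

theorem le_add_inner_add_sq_of_lipschitz_gradient {F : X → ℝ} {f : X → X}
    (hF : ∀ x, HasGradientAt F (f x) x) {L : ℝ} (hLip : ∀ x y, ‖f x - f y‖ ≤ L * ‖x - y‖)
    (x y : X) :
    F y ≤ F x + ⟪f x, y - x⟫ + L / 2 * ‖y - x‖ ^ 2 := by
  set d := y - x
  let ψ : ℝ → ℝ := fun t => F (x + t • d) - t * ⟪f x, d⟫ - L * ‖d‖ ^ 2 / 2 * t ^ 2
  have hψ : ∀ t, HasDerivAt ψ (⟪f (x + t • d) - f x, d⟫ - L * ‖d‖ ^ 2 * t) t := by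
    intro t
    refine ((((hF _).hasDerivAt_comp_add_smul).sub ((hasDerivAt_id t).mul_const _)).sub
      ((hasDerivAt_pow 2 t).const_mul (L * ‖d‖ ^ 2 / 2))).congr_deriv ?_
    rw [inner_sub_left]
    push_cast
    ring
  have hψ' : ∀ t ∈ interior (Set.Ici (0 : ℝ)), ⟪f (x + t • d) - f x, d⟫ - L * ‖d‖ ^ 2 * t ≤ 0 := by
    intro t ht
    rw [interior_Ici, Set.mem_Ioi] at ht
    rw [sub_nonpos]
    have hstep : ‖f (x + t • d) - f x‖ ≤ L * (t * ‖d‖) := by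
      simpa [norm_smul, abs_of_pos ht] using hLip (x + t • d) x
    calc ⟪f (x + t • d) - f x, d⟫ ≤ ‖f (x + t • d) - f x‖ * ‖d‖ := real_inner_le_norm _ _
      _ ≤ L * (t * ‖d‖) * ‖d‖ := by gcongr
      _ = L * ‖d‖ ^ 2 * t := by ring
  have hanti : AntitoneOn ψ (Set.Ici 0) :=
    antitoneOn_of_hasDerivWithinAt_nonpos (convex_Ici 0)
      (fun t _ => (hψ t).continuousAt.continuousWithinAt)
      (fun t _ => (hψ t).hasDerivWithinAt) hψ'
  have h10 := hanti (Set.mem_Ici.mpr le_rfl) (Set.mem_Ici.mpr zero_le_one) zero_le_one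
  simp only [ψ, d, zero_smul, add_zero, zero_mul, sub_zero, one_smul, add_sub_cancel, one_mul,
    one_pow] at h10
  linarith

end Gradient

theorem two_mul_inner_map_le_add {X : Type*} [NormedAddCommGroup X] [InnerProductSpace ℝ X]
    (M : X →ₗ[ℝ] X) (hMsym : ∀ x y : X, ⟪M x, y⟫ = ⟪x, M y⟫)
    (hMpsd : ∀ x : X, 0 ≤ ⟪M x, x⟫) (x y : X) :
    2 * ⟪M x, y⟫ ≤ ⟪M x, x⟫ + ⟪M y, y⟫ := by
  have h := hMpsd (x - y)
  simp only [map_sub, inner_sub_left, inner_sub_right] at h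
  linarith [hMsym x y, real_inner_comm x (M y)]

theorem energy_decrease_util_general
    {X : Type*} [NormedAddCommGroup X] [InnerProductSpace ℝ X] [FiniteDimensional ℝ X]
    (H : X → ℝ) (h : X → X) (hH : ∀ x : X, HasGradientAt H (h x) x)
    (hHconv : ConvexOn ℝ Set.univ H)
    (F : X → ℝ) (f : X → X) (hF : ∀ x : X, HasGradientAt F (f x) x)
    (L : ℝ) (hLip : ∀ x y : X, ‖f x - f y‖ ≤ L * ‖x - y‖)
    (δt : ℝ)
    (M : X →L[ℝ] X) (hMsym : ∀ x y : X, ⟪M x, y⟫ = ⟪x, M y⟫)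
    (hMpsd : ∀ x : X, 0 ≤ ⟪M x, x⟫)
    (un unm1 : X)
    (Hn Fn En : X → ℝ)
    (hHn : ∀ u : X, Hn u = H u + (1 / δt) * ‖u - un‖ ^ 2)
    (hFn : ∀ u : X, Fn u = (1 / (3 * δt)) * ‖u - unm1‖ ^ 2 - F u
      - ⟪f un - f unm1, u - unm1⟫)
    (hEn : ∀ u : X, En u = Hn u - Fn u)
    (util : X) (hutil : util = (4 / 3 : ℝ) • un - (1 / 3 : ℝ) • unm1)
    (yn : X)
    (hopt : (2 / (3 * δt)) • ((3 : ℝ) • yn - (4 : ℝ) • un + unm1) + M (yn - util)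
      + h yn + (2 : ℝ) • f un - f unm1 = 0) :
    En yn ≤ En un - (4 / (3 * δt) - L / 2) * ‖yn - un‖ ^ 2
      - (5 / 6) * ⟪M (yn - un), yn - un⟫ + (1 / 6) * ⟪M (un - unm1), un - unm1⟫ := by
  set d := yn - un
  set e := un - unm1
  have hstep : (3 : ℝ) • yn - (4 : ℝ) • un + unm1 = (3 : ℝ) • d - e := by module
  have hextrap : yn - util = d - (1 / 3 : ℝ) • e := by rw [hutil]; module
  have hback : un - yn = -d := (neg_sub yn un).symm
  have hspan : yn - unm1 = d + e := (sub_add_sub_cancel yn un unm1).symm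
  have hconv := hHconv.add_inner_le_of_hasGradientAt_s14 (hH yn) un
  have hdesc : F yn ≤ F un + ⟪f un, d⟫ + L / 2 * ‖d‖ ^ 2 :=
    le_add_inner_add_sq_of_lipschitz_gradient hF hLip un yn
  have hMde := two_mul_inner_map_le_add (M : X →ₗ[ℝ] X) hMsym hMpsd e d
  have hopt_d := congrArg (⟪·, d⟫) hopt
  rw [hstep, hextrap] at hopt_d
  simp only [map_sub, map_smul, inner_add_left, inner_sub_left, real_inner_smul_left,
    real_inner_self_eq_norm_sq, inner_zero_left] at hopt_d
  rw [hback, inner_neg_right] at hconv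
  rw [hEn, hEn, hHn, hHn, hFn, hFn, sub_self, norm_zero, hspan, norm_add_sq_real,
    inner_add_right, inner_sub_left (f un)]
  linear_combination
    hconv + hdesc + hopt_d + (1 / 6) * hMde + 2 / (3 * δt) * real_inner_comm d e

/-- Energy decrease for the extrapolated starting point `ũⁿ = (4/3)uⁿ - (1/3)uⁿ⁻¹`. -/
theorem energy_decrease_util
    {X : Type*} [NormedAddCommGroup X] [InnerProductSpace ℝ X] [FiniteDimensional ℝ X]
    (H : X → ℝ) (h : X → X) (hH : ∀ x : X, HasGradientAt H (h x) x)
    (hHconv : ConvexOn ℝ Set.univ H)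
    (F : X → ℝ) (f : X → X) (hF : ∀ x : X, HasGradientAt F (f x) x)
    (L : ℝ) (hL : 0 < L) (hLip : ∀ x y : X, ‖f x - f y‖ ≤ L * ‖x - y‖)
    (δt : ℝ) (hδt : 0 < δt) (hδt2 : δt < 2 / (3 * L))
    (M : X →L[ℝ] X) (hMsym : ∀ x y : X, ⟪M x, y⟫ = ⟪x, M y⟫)
    (hMpsd : ∀ x : X, 0 ≤ ⟪M x, x⟫)
    (un unm1 : X)
    (Hn Fn En : X → ℝ)
    (hHn : ∀ u : X, Hn u = H u + (1 / δt) * ‖u - un‖ ^ 2)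
    (hFn : ∀ u : X, Fn u = (1 / (3 * δt)) * ‖u - unm1‖ ^ 2 - F u
      - ⟪f un - f unm1, u - unm1⟫)
    (hEn : ∀ u : X, En u = Hn u - Fn u)
    (util : X) (hutil : util = (4 / 3 : ℝ) • un - (1 / 3 : ℝ) • unm1)
    (yn : X)
    (hopt : (2 / (3 * δt)) • ((3 : ℝ) • yn - (4 : ℝ) • un + unm1) + M (yn - util)
      + h yn + (2 : ℝ) • f un - f unm1 = 0) :
    En yn ≤ En un - (4 / (3 * δt) - L / 2) * ‖yn - un‖ ^ 2
      - (5 / 6) * ⟪M (yn - un), yn - un⟫ + (1 / 6) * ⟪M (un - unm1), un - unm1⟫ :=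
  energy_decrease_util_general H h hH hHconv F f hF L hLip δt M hMsym hMpsd un unm1 Hn Fn En hHn hFn
    hEn util hutil yn hopt
end

section
/- Let D, E be n × n real matrices with D symmetric positive definite, and let T = D − E − Eᵀ and 𝕄 = (D − E)D⁻¹(D − Eᵀ) be the symmetric Gauss–Seidel preconditioner. Then M := 𝕄 − T = E D⁻¹ Eᵀ, which is symmetric positive semidefinite; moreover, if ‖D⁻¹‖ ≤ c₁ δt, ‖E‖ ≤ c₂, and ‖u^{n+1} − û^n‖ ≤ c₃ δt for positive constants c₁, c₂, c₃ and δt > 0, then ‖M(u^{n+1} − û^n)‖ ≤ c₁ c₂² c₃ δt², i.e., the SGS preconditioning term is of order O(δt²). -/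
/-!
Expanding `(D - E) D⁻¹ (D - Eᵀ)` leaves `D - E - Eᵀ + E D⁻¹ Eᵀ`, so `M = E D⁻¹ Eᵀ`, a congruence
transform of the positive definite `D⁻¹`. In the L2 operator norm `‖Eᵀ‖ = ‖E‖`, and
submultiplicativity gives `‖M‖ ≤ ‖E‖² ‖D⁻¹‖ ≤ c₂² c₁ δt`; one more factor `c₃ δt` comes from the step.
-/

open Matrix
open scoped Matrix.Norms.L2Operator

namespace Matrix

theorem sub_mul_nonsing_inv_mul_sub_sub {n α : Type*} [Fintype n] [DecidableEq n] [CommRing α]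
    {D : Matrix n n α} (hD : IsUnit D.det) (E F : Matrix n n α) :
    (D - E) * D⁻¹ * (D - F) - (D - E - F) = E * D⁻¹ * F := by
  simp only [sub_mul, mul_sub, mul_nonsing_inv D hD, Matrix.mul_assoc, nonsing_inv_mul D hD]
  simp only [Matrix.one_mul, Matrix.mul_one]
  abel

variable {𝕜 n : Type*} [RCLike 𝕜] [Fintype n] [DecidableEq n]

theorem norm_toEuclideanLin_apply_le (A : Matrix n n 𝕜) (v : EuclideanSpace 𝕜 n) :
    ‖toEuclideanLin A v‖ ≤ ‖A‖ * ‖v‖ :=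
  (toEuclideanCLM (𝕜 := 𝕜) A).le_opNorm v

theorem l2_opNorm_le_of_forall {A : Matrix n n 𝕜} {c : ℝ} (hc : 0 ≤ c)
    (h : ∀ v : EuclideanSpace 𝕜 n, ‖toEuclideanLin A v‖ ≤ c * ‖v‖) : ‖A‖ ≤ c :=
  (toEuclideanCLM (𝕜 := 𝕜) A).opNorm_le_bound hc h

theorem l2_opNorm_mul_mul_conjTranspose_le (A B : Matrix n n 𝕜) :
    ‖A * B * Aᴴ‖ ≤ ‖A‖ ^ 2 * ‖B‖ :=
  calc ‖A * B * Aᴴ‖ ≤ ‖A‖ * ‖B‖ * ‖Aᴴ‖ := norm_mul₃_le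
    _ = ‖A‖ ^ 2 * ‖B‖ := by rw [l2_opNorm_conjTranspose]; ring

end Matrix

theorem sgs_preconditioner_order_general
    (k : ℕ) (D E : Matrix (Fin k) (Fin k) ℝ) (hD : D.PosDef)
    (T 𝕄 M : Matrix (Fin k) (Fin k) ℝ)
    (hT : T = D - E - Eᵀ)
    (h𝕄 : 𝕄 = (D - E) * D⁻¹ * (D - Eᵀ))
    (hM : M = 𝕄 - T)
    (c₁ c₂ c₃ δt : ℝ) (hc₁ : 0 < c₁) (hc₂ : 0 < c₂) (hδt : 0 < δt)
    (hDinv : ∀ v : EuclideanSpace ℝ (Fin k),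
      ‖Matrix.toEuclideanLin D⁻¹ v‖ ≤ c₁ * δt * ‖v‖)
    (hEbd : ∀ v : EuclideanSpace ℝ (Fin k),
      ‖Matrix.toEuclideanLin E v‖ ≤ c₂ * ‖v‖)
    (unp1 uhat : EuclideanSpace ℝ (Fin k)) (hstep : ‖unp1 - uhat‖ ≤ c₃ * δt) :
    M = E * D⁻¹ * Eᵀ ∧ M.PosSemidef ∧
      ‖Matrix.toEuclideanLin M (unp1 - uhat)‖ ≤ c₁ * c₂ ^ 2 * c₃ * δt ^ 2 := by
  have hMeq : M = E * D⁻¹ * Eᵀ := by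
    rw [hM, h𝕄, hT]
    exact sub_mul_nonsing_inv_mul_sub_sub (isUnit_iff_ne_zero.mpr hD.det_pos.ne') E Eᵀ
  refine ⟨hMeq, ?_⟩
  rw [hMeq, ← conjTranspose_eq_transpose_of_trivial]
  refine ⟨hD.inv.posSemidef.mul_mul_conjTranspose_same E, ?_⟩
  have hE : ‖E‖ ≤ c₂ := l2_opNorm_le_of_forall hc₂.le hEbd
  have hDi : ‖D⁻¹‖ ≤ c₁ * δt := l2_opNorm_le_of_forall (by positivity) hDinv
  have hc₃δt : 0 ≤ c₃ * δt := (norm_nonneg _).trans hstep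
  calc ‖toEuclideanLin (E * D⁻¹ * Eᴴ) (unp1 - uhat)‖
      ≤ ‖E * D⁻¹ * Eᴴ‖ * ‖unp1 - uhat‖ := norm_toEuclideanLin_apply_le _ _
    _ ≤ ‖E‖ ^ 2 * ‖D⁻¹‖ * (c₃ * δt) := by
      gcongr
      exact l2_opNorm_mul_mul_conjTranspose_le E D⁻¹
    _ ≤ c₂ ^ 2 * (c₁ * δt) * (c₃ * δt) := by gcongr
    _ = c₁ * c₂ ^ 2 * c₃ * δt ^ 2 := by ring

/-- For the symmetric Gauss–Seidel preconditioner
`𝕄 = (D - E)D⁻¹(D - Eᵀ)` of `T = D - E - Eᵀ` with `D` symmetric positive definite, the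
induced proximal weight is `M = 𝕄 - T = E D⁻¹ Eᵀ`, which is symmetric positive
semidefinite; moreover, under the operator bounds `‖D⁻¹‖ ≤ c₁ δt`, `‖E‖ ≤ c₂` and the step
bound `‖uⁿ⁺¹ - ûⁿ‖ ≤ c₃ δt`, the SGS preconditioning term satisfies
`‖M(uⁿ⁺¹ - ûⁿ)‖ ≤ c₁ c₂² c₃ δt²`, i.e. it is of order `O(δt²)`. -/
theorem sgs_preconditioner_order
    (k : ℕ) (D E : Matrix (Fin k) (Fin k) ℝ) (hD : D.PosDef)
    (T 𝕄 M : Matrix (Fin k) (Fin k) ℝ)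
    (hT : T = D - E - Eᵀ)
    (h𝕄 : 𝕄 = (D - E) * D⁻¹ * (D - Eᵀ))
    (hM : M = 𝕄 - T)
    (c₁ c₂ c₃ δt : ℝ) (hc₁ : 0 < c₁) (hc₂ : 0 < c₂) (hc₃ : 0 < c₃) (hδt : 0 < δt)
    (hDinv : ∀ v : EuclideanSpace ℝ (Fin k),
      ‖Matrix.toEuclideanLin D⁻¹ v‖ ≤ c₁ * δt * ‖v‖)
    (hEbd : ∀ v : EuclideanSpace ℝ (Fin k),
      ‖Matrix.toEuclideanLin E v‖ ≤ c₂ * ‖v‖)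
    (unp1 uhat : EuclideanSpace ℝ (Fin k)) (hstep : ‖unp1 - uhat‖ ≤ c₃ * δt) :
    M = E * D⁻¹ * Eᵀ ∧ M.PosSemidef ∧
      ‖Matrix.toEuclideanLin M (unp1 - uhat)‖ ≤ c₁ * c₂ ^ 2 * c₃ * δt ^ 2 :=
  sgs_preconditioner_order_general k D E hD T 𝕄 M hT h𝕄 hM c₁ c₂ c₃ δt hc₁ hc₂ hδt hDinv hEbd unp1
    uhat hstep
end
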